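/- For every complex number x and every natural number n, the sum over k from 0 to n of (-1)^k * x^(n-k) * (L_{k+1} + (x-2) * F_k) equals (-1)^n * F_{n+1}, where F and L are the Fibonacci and Lucas numbers. -/
import Mathlib


open Finset

noncomputable def fibC : ℕ → ℂ
  | 0 => 0
  | 1 => 1
  | n + 2 => fibC (n + 1) + fibC n

noncomputable def lucasC : ℕ → ℂ
  | 0 => 2
  | 1 => 1
  | n + 2 => lucasC (n + 1) + lucasC n

lemma lucas_fib : ∀ n : ℕ, lucasC (n + 1) = fibC n + fibC (n + 2)
  | 0 => by simp [lucasC, fibC]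
  | 1 => by simp [lucasC, fibC]; ring
  | n + 2 => by
    have h1 := lucas_fib n
    have h2 := lucas_fib (n + 1)
    show lucasC (n + 2) + lucasC (n + 1) = _
    rw [h1, h2]
    show _ = fibC (n + 2) + fibC (n + 4)
    rw [show fibC (n + 4) = fibC (n + 3) + fibC (n + 2) from rfl,
      show fibC (n + 3) = fibC (n + 2) + fibC (n + 1) from rfl,
      show fibC (n + 2) = fibC (n + 1) + fibC n from rfl]
    ring

theorem stmt1 (x : ℂ) (n : ℕ) :
    ∑ k ∈ Finset.range (n + 1), (-1 : ℂ) ^ k * x ^ (n - k) * (lucasC (k + 1) + (x - 2) * fibC k) =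
      (-1 : ℂ) ^ n * fibC (n + 1) := by
  induction n with
  | zero => simp [lucasC, fibC]
  | succ n ih =>
    rw [Finset.sum_range_succ]
    have hx : ∀ k ∈ Finset.range (n + 1),
        (-1 : ℂ) ^ k * x ^ (n + 1 - k) * (lucasC (k + 1) + (x - 2) * fibC k)
        = x * ((-1 : ℂ) ^ k * x ^ (n - k) * (lucasC (k + 1) + (x - 2) * fibC k)) := by
      intro k hk
      rw [Finset.mem_range] at hk
      rw [show n + 1 - k = (n - k) + 1 by omega, pow_succ]
      ring
    rw [Finset.sum_congr rfl hx, ← Finset.mul_sum, ih]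
    simp only [Nat.sub_self, pow_zero]
    rw [lucas_fib (n + 1)]
    rw [show fibC (n + 3) = fibC (n + 2) + fibC (n + 1) from rfl]
    ring
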